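/- arXiv:1812.10792 — 3 statements merged into one kernel-verified Lean document; each statement's English description precedes it below -/
import Mathlib

section
/- Let T be Erlang-distributed with shape N and rate λ > 0, and define λ' = (T/θ)·λ for a constant θ > 0. Then λ' is Erlang-distributed with shape N and rate θ; in particular, the distribution of λ' does not depend on λ. -/
/-!
Multiplying a Gamma(a, r) variable by `c > 0` divides its rate by `c`: the change of variables
`y = c x` turns the density `r^a x^(a-1) e^(-r x) / Γ(a)` into
`(r/c)^a y^(a-1) e^(-(r/c) y) / Γ(a)`. Since `T/θ · λ = T · (λ/θ)`, the rate `λ` becomes `θ`.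
-/

open MeasureTheory ProbabilityTheory
open scoped ENNReal

lemma map_mul_right_volume_withDensity {f : ℝ → ℝ≥0∞} (hf : Measurable f) {c : ℝ} (hc : c ≠ 0) :
    (volume.withDensity f).map (· * c) =
      volume.withDensity (fun y => ENNReal.ofReal |c⁻¹| * f (y / c)) := by
  have hmul : Measurable (· * c : ℝ → ℝ) := measurable_id.mul_const c
  ext s hs
  rw [Measure.map_apply hmul hs, withDensity_apply _ (hmul hs), withDensity_apply _ hs,
    lintegral_const_mul _ (by fun_prop : Measurable fun y => f (y / c))]
  conv_rhs => rw [← Real.smul_map_volume_mul_right hc]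
  rw [Measure.restrict_smul, lintegral_smul_measure, setLIntegral_map hs (by fun_prop) hmul]
  simp only [mul_div_cancel_right₀ _ hc, smul_eq_mul, abs_inv,
    ENNReal.ofReal_inv_of_pos (abs_pos.mpr hc)]
  rw [ENNReal.inv_mul_cancel_left (by simpa using hc) ENNReal.ofReal_ne_top]

lemma ofReal_inv_mul_gammaPDF_div (a : ℝ) {r c : ℝ} (hr : 0 ≤ r) (hc : 0 < c) (y : ℝ) :
    ENNReal.ofReal c⁻¹ * gammaPDF a r (y / c) = gammaPDF a (r / c) y := by
  rcases lt_or_ge y 0 with hy | hy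
  · rw [gammaPDF_of_neg (div_neg_of_neg_of_pos hy hc), gammaPDF_of_neg hy, mul_zero]
  rw [gammaPDF_of_nonneg (div_nonneg hy hc.le), gammaPDF_of_nonneg hy,
    ← ENNReal.ofReal_mul (inv_nonneg.mpr hc.le)]
  congr 1
  have hc_pow : c⁻¹ * (c ^ (a - 1))⁻¹ = (c ^ a)⁻¹ := by
    rw [← mul_inv, mul_comm, ← Real.rpow_add_one hc.ne', sub_add_cancel]
  calc c⁻¹ * (r ^ a / Real.Gamma a * (y / c) ^ (a - 1) * Real.exp (-(r * (y / c))))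
      = r ^ a * (c⁻¹ * (c ^ (a - 1))⁻¹) / Real.Gamma a * y ^ (a - 1)
          * Real.exp (-(r / c * y)) := by
        rw [Real.div_rpow hy hc.le]; ring_nf
    _ = (r / c) ^ a / Real.Gamma a * y ^ (a - 1) * Real.exp (-(r / c * y)) := by
        rw [hc_pow, Real.div_rpow hr hc.le, div_eq_mul_inv (r ^ a)]

lemma gammaMeasure_map_mul_right (a : ℝ) {r c : ℝ} (hr : 0 ≤ r) (hc : 0 < c) :
    (gammaMeasure a r).map (· * c) = gammaMeasure a (r / c) := by
  have hpdf : Measurable (gammaPDF a r) := (measurable_gammaPDFReal a r).ennreal_ofReal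
  rw [gammaMeasure, map_mul_right_volume_withDensity hpdf hc.ne', gammaMeasure,
    abs_of_pos (inv_pos.mpr hc)]
  simp only [ofReal_inv_mul_gammaPDF_div a hr hc]

theorem erlang_rescale_general (N : ℕ) (l θ : ℝ) (hl : 0 < l) (hθ : 0 < θ) :
    (gammaMeasure N l).map (fun t => t / θ * l) = gammaMeasure N θ := by
  have hrescale : (fun t : ℝ => t / θ * l) = (· * (l / θ)) := by
    funext t; ring
  rw [hrescale, gammaMeasure_map_mul_right _ hl.le (div_pos hl hθ), div_div_cancel₀ hl.ne']

/-- If T ~ Erlang(N, λ) and λ' = (T/θ)·λ, then λ' ~ Erlang(N, θ):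
the law of the rescaled variable does not depend on λ. -/
theorem erlang_rescale (N : ℕ) (hN : 0 < N) (l θ : ℝ) (hl : 0 < l) (hθ : 0 < θ) :
    (gammaMeasure N l).map (fun t => t / θ * l) = gammaMeasure N θ :=
  erlang_rescale_general N l θ hl hθ
end

section
/- In the Bitcoin retargeting model with constant hashrate (δ = 1), the expected blocktime after the first retargeting period is (N/(N-1))·β, which is strictly greater than the target β for every integer N > 1. -/
open MeasureTheory Real Set

/-!
Substituting `y = x + θ`, the mean of the Lomax law becomes
`α θ^α ∫_θ^∞ (y - θ) y^{-(α+1)} dy`, a difference of two power integrals, equal to `θ / (α - 1)`.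
With `α = N` and `θ = Nβ` this is `Nβ / (N - 1) > β`.
-/

theorem setIntegral_Ioi_comp_add_right {E : Type*} [NormedAddCommGroup E] [NormedSpace ℝ E]
    (f : ℝ → E) (a c : ℝ) : ∫ x in Ioi a, f (x + c) = ∫ y in Ioi (a + c), f y := by
  simpa [preimage_add_const_Ioi] using
    (measurePreserving_add_right volume c).setIntegral_preimage_emb
      (measurableEmbedding_addRight c) f (Ioi (a + c))

theorem integral_Ioi_sub_div_rpow {α θ : ℝ} (hα : 1 < α) (hθ : 0 < θ) :
    ∫ y in Ioi θ, (y - θ) / y ^ (α + 1) = θ ^ (1 - α) / (α * (α - 1)) := by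
  have hsplit : EqOn (fun y => (y - θ) / y ^ (α + 1))
      (fun y => y ^ (-α) - θ * y ^ (-(α + 1))) (Ioi θ) := by
    intro y (hy : θ < y)
    have hy0 : 0 < y := hθ.trans hy
    dsimp only
    rw [div_eq_mul_inv, ← rpow_neg hy0.le, sub_mul, show -α = -(α + 1) + 1 by ring,
      rpow_add_one hy0.ne']
    ring
  have hpow : θ ^ (-α) = θ ^ (1 - α) / θ := by
    rw [sub_eq_neg_add, rpow_add_one hθ.ne', mul_div_cancel_right₀ _ hθ.ne']
  rw [setIntegral_congr_fun measurableSet_Ioi hsplit,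
    integral_sub (integrableOn_Ioi_rpow_of_lt (by linarith) hθ)
      ((integrableOn_Ioi_rpow_of_lt (by linarith) hθ).const_mul θ),
    integral_const_mul, integral_Ioi_rpow_of_lt (by linarith) hθ,
    integral_Ioi_rpow_of_lt (by linarith) hθ, show -(α + 1) + 1 = -α by ring, neg_add_eq_sub, hpow]
  have : 1 - α ≠ 0 := by linarith
  have : α - 1 ≠ 0 := by linarith
  have : α ≠ 0 := by linarith
  field_simp
  ring

-- Shape `α`, scale `θ`; the formula is the density only on `Ioi 0`, with no cutoff below `0`.
noncomputable def lomaxDensity (α θ x : ℝ) : ℝ := α * θ ^ α / (x + θ) ^ (α + 1)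

theorem integral_Ioi_mul_lomaxDensity {α θ : ℝ} (hα : 1 < α) (hθ : 0 < θ) :
    ∫ x in Ioi 0, x * lomaxDensity α θ x = θ / (α - 1) := by
  have hshift (x : ℝ) :
      x * lomaxDensity α θ x = α * θ ^ α * ((x + θ - θ) / (x + θ) ^ (α + 1)) := by
    rw [lomaxDensity, add_sub_cancel_right]
    ring
  simp_rw [hshift]
  rw [integral_const_mul, setIntegral_Ioi_comp_add_right (fun y => (y - θ) / y ^ (α + 1)),
    zero_add, integral_Ioi_sub_div_rpow hα hθ, mul_div_assoc', mul_assoc, ← rpow_add hθ,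
    add_sub_cancel, rpow_one]
  have : α - 1 ≠ 0 := by linarith
  have : α ≠ 0 := by linarith
  field_simp

/-- With constant hashrate (δ = 1, so θ = Nβ), the expected blocktime after the first
retargeting period is (N/(N-1))β > β for every integer N > 1. -/
theorem retarget_mean_blocktime (N : ℕ) (hN : 1 < N) (β : ℝ) (hβ : 0 < β) :
    (∫ x in Ioi (0:ℝ), x * (N * (N * β) ^ N / (x + N * β) ^ (N + 1)))
      = (N / (N - 1)) * β ∧
    (N / (N - 1) : ℝ) * β > β := by
  have hN' : (1 : ℝ) < N := by exact_mod_cast hN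
  have hdensity (x : ℝ) :
      N * (N * β) ^ N / (x + N * β) ^ (N + 1) = lomaxDensity N (N * β) x := by
    rw [lomaxDensity, rpow_natCast, ← Nat.cast_add_one, rpow_natCast]
  refine ⟨?_, lt_mul_of_one_lt_left hβ ((one_lt_div (by linarith)).mpr (by linarith))⟩
  simp_rw [hdensity]
  rw [integral_Ioi_mul_lomaxDensity hN' (by positivity)]
  ring
end

section
/- Let λ₁ > 0 and define recursively λ_{n+1} = λ_n T_n/(Nβ), where conditionally on λ_n, T_n ~ Erlang(N, λ_n), and δ_n = 1. Then for every n ≥ 2, the marginal distribution of λ_n is Erlang(N, Nβ), independent of n and of λ₁. -/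
/-!
If `T ~ Gamma(N, l)` then `l T ~ Gamma(N, 1)`, so the retargeted rate `l T / (N β)` has law
`Gamma(N, N β)` whatever the current rate `l > 0`. Hence one retargeting step sends every law
on `(0, ∞)` to `Gamma(N, N β)`, which is itself concentrated on `(0, ∞)` and therefore fixed.
-/

open MeasureTheory ProbabilityTheory

namespace ProbabilityTheory

lemma gammaPDF_eq_ofReal_mul_gammaPDF_div {a r c : ℝ} (hr : 0 < r) (hc : 0 < c) (x : ℝ) :
    gammaPDF a r x = ENNReal.ofReal c * gammaPDF a (r / c) (c * x) := by
  rcases le_or_gt 0 x with hx | hx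
  · rw [gammaPDF_of_nonneg hx, gammaPDF_of_nonneg (by positivity), ← ENNReal.ofReal_mul hc.le,
      Real.div_rpow hr.le hc.le, Real.mul_rpow hc.le hx, Real.rpow_sub_one hc.ne']
    have hca : c ^ a ≠ 0 := (Real.rpow_pos_of_pos hc a).ne'
    congr 1
    field_simp
  · rw [gammaPDF_of_neg hx, gammaPDF_of_neg (mul_neg_of_pos_of_neg hc hx), mul_zero]

lemma gammaMeasure_map_const_mul {a r c : ℝ} (hr : 0 < r) (hc : 0 < c) :
    (gammaMeasure a r).map (c * ·) = gammaMeasure a (r / c) := by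
  have hmul : Measurable (c * · : ℝ → ℝ) := measurable_const_mul c
  have hpdf : Measurable (gammaPDF a (r / c)) :=
    (measurable_gammaPDFReal a (r / c)).ennreal_ofReal
  have hvol : (volume : Measure ℝ) = ENNReal.ofReal c • volume.map (c * ·) := by
    rw [Real.map_volume_mul_left hc.ne', smul_smul, ← ENNReal.ofReal_mul hc.le,
      abs_of_pos (inv_pos.mpr hc), mul_inv_cancel₀ hc.ne', ENNReal.ofReal_one, one_smul]
  ext s hs
  rw [Measure.map_apply hmul hs, gammaMeasure, gammaMeasure,
    withDensity_apply _ (hmul hs), withDensity_apply _ hs]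
  conv_rhs => rw [hvol]
  rw [Measure.restrict_smul, lintegral_smul_measure, Measure.restrict_map hmul hs,
    lintegral_map hpdf hmul, smul_eq_mul, ← lintegral_const_mul _ (by fun_prop)]
  exact lintegral_congr (gammaPDF_eq_ofReal_mul_gammaPDF_div hr hc)

lemma gammaMeasure_map_mul_div {a r s : ℝ} (hr : 0 < r) (hs : 0 < s) :
    (gammaMeasure a r).map (fun t => r * t / s) = gammaMeasure a s := by
  have hfun : (fun t : ℝ => r * t / s) = (r / s * ·) := by
    funext t
    ring
  rw [hfun, gammaMeasure_map_const_mul hr (div_pos hr hs), div_div_cancel₀ hr.ne']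

lemma ae_pos_gammaMeasure {a r : ℝ} : ∀ᵐ x ∂gammaMeasure a r, 0 < x := by
  have hIic : {x : ℝ | ¬ 0 < x} = Set.Iic 0 := by
    ext x
    simp
  rw [ae_iff, hIic, gammaMeasure, withDensity_apply _ measurableSet_Iic,
    setLIntegral_congr Iio_ae_eq_Iic.symm, lintegral_gammaPDF_of_nonpos le_rfl]

end ProbabilityTheory

lemma MeasureTheory.Measure.bind_eq_of_ae_eq_const {α β : Type*} [MeasurableSpace α]
    [MeasurableSpace β] {m : Measure α} [IsProbabilityMeasure m] {f : α → Measure β}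
    {ν : Measure β} (h : ∀ᵐ x ∂m, f x = ν) : m.bind f = ν := by
  rw [Measure.bind_congr_right h, Measure.bind_const, measure_univ, one_smul]

lemma bind_gammaMeasure_map_mul_div {a s : ℝ} (hs : 0 < s) {m : Measure ℝ}
    [IsProbabilityMeasure m] (hm : ∀ᵐ l ∂m, 0 < l) :
    m.bind (fun l => (gammaMeasure a l).map (fun t => l * t / s)) = gammaMeasure a s :=
  Measure.bind_eq_of_ae_eq_const (hm.mono fun _ hl => gammaMeasure_map_mul_div hl hs)

/-- Under the Bitcoin retargeting recursion λ_{n+1} = λ_n T_n/(Nβ) with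
T_n | λ_n ~ Erlang(N, λ_n) and constant hashrate, the marginal law of λ_n is
Erlang(N, Nβ) for every n ≥ 2, independently of n and of the initial rate λ₁. -/
theorem retarget_rate_stationary (N : ℕ) (hN : 1 ≤ N) (β : ℝ) (hβ : 0 < β)
    (l₁ : ℝ) (hl₁ : 0 < l₁) (μ : ℕ → Measure ℝ)
    (h1 : μ 1 = Measure.dirac l₁)
    (hrec : ∀ n ≥ 1, μ (n + 1)
      = (μ n).bind (fun l => (gammaMeasure N l).map (fun t => l * t / (N * β)))) :
    ∀ n ≥ 2, μ n = gammaMeasure N (N * β) := by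
  have hNβ : (0 : ℝ) < N * β := mul_pos (by exact_mod_cast hN) hβ
  have : IsProbabilityMeasure (gammaMeasure N (N * β)) :=
    isProbabilityMeasure_gammaMeasure (by exact_mod_cast hN) hNβ
  intro n hn
  induction n, hn using Nat.le_induction with
  | base =>
    rw [hrec 1 le_rfl, h1]
    exact bind_gammaMeasure_map_mul_div hNβ (ae_dirac_iff measurableSet_Ioi |>.mpr hl₁)
  | succ n hn ih =>
    rw [hrec n (by omega), ih]
    exact bind_gammaMeasure_map_mul_div hNβ ae_pos_gammaMeasure
end
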